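/- For all typical weights λ, μ, the operator T_{λ,μ} : L(λ)⊗L(μ) → L(μ)⊗L(λ) is an F-linear isomorphism and is equivariant: T_{λ,μ}∘Δ_{λ,μ}(E) = Δ_{μ,λ}(E)∘T_{λ,μ}, T_{λ,μ}∘Δ_{λ,μ}(F) = Δ_{μ,λ}(F)∘T_{λ,μ}, and T_{λ,μ}∘Δ_{λ,μ}(Q(h)) = Δ_{μ,λ}(Q(h))∘T_{λ,μ} for every h ∈ ℤ². (This expresses that the braiding Ř = T⁻¹ is a U_q(gl(1|1))-module homomorphism.) -/

import Mathlib

set_option synthInstance.maxHeartbeats 1000000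
set_option maxHeartbeats 1000000
noncomputable section
open scoped TensorProduct

abbrev F : Type := RatFunc ℂ
def q : F := RatFunc.X

/-- The quantum integer [n] = (qⁿ − q⁻ⁿ)/(q − q⁻¹). -/
def qn (n : ℤ) : F := (q ^ n - q ^ (-n)) / (q - q⁻¹)

abbrev V : Type := Fin 2 → F
def v0 : V := Pi.single 0 1
def v1 : V := Pi.single 1 1

def Eop : V →ₗ[F] V := Matrix.toLin' !![0, 1; 0, 0]
def Fop (l : ℤ × ℤ) : V →ₗ[F] V := Matrix.toLin' !![0, 0; qn (l.1 + l.2), 0]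
def Qop (l : ℤ × ℤ) (h : ℤ × ℤ) : V →ₗ[F] V :=
  Matrix.toLin' !![q ^ (h.1 * l.1 + h.2 * l.2), 0; 0, q ^ (h.1 * (l.1 - 1) + h.2 * (l.2 + 1))]
def Pop (l : ℤ × ℤ) : V →ₗ[F] V :=
  Matrix.toLin' !![(-1 : F) ^ l.2, 0; 0, (-1 : F) ^ (l.2 + 1)]
def Kop (l : ℤ × ℤ) : V →ₗ[F] V := Qop l (1, 1)
def Kinv (l : ℤ × ℤ) : V →ₗ[F] V := Qop l (-1, -1)

def ΔE (l m : ℤ × ℤ) : V ⊗[F] V →ₗ[F] V ⊗[F] V :=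
  TensorProduct.map Eop (Kinv m) + TensorProduct.map (Pop l) Eop
def ΔF (l m : ℤ × ℤ) : V ⊗[F] V →ₗ[F] V ⊗[F] V :=
  TensorProduct.map (Fop l) LinearMap.id + TensorProduct.map (Kop l ∘ₗ Pop l) (Fop m)
def ΔQ (l m : ℤ × ℤ) (h : ℤ × ℤ) : V ⊗[F] V →ₗ[F] V ⊗[F] V :=
  TensorProduct.map (Qop l h) (Qop m h)

def bV : Module.Basis (Fin 2) F V := Pi.basisFun F (Fin 2)
def bVV : Module.Basis (Fin 2 × Fin 2) F (V ⊗[F] V) := Module.Basis.tensorProduct bV bV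

/-- `(λ,μ) = λ₁μ₁ − λ₂μ₂`. -/
def pr (a b : ℤ × ℤ) : ℤ := a.1 * b.1 - a.2 * b.2
/-- `λ − α`. -/
def am (a : ℤ × ℤ) : ℤ × ℤ := (a.1 - 1, a.2 + 1)

/-- The operator `T_{λ,μ} : L(λ)⊗L(μ) → L(μ)⊗L(λ)` (the inverse braiding `Ř⁻¹`),
defined on the basis `v_i ⊗ v_j`; in each output the first factor lies in `L(μ)`. -/
def Tmap (l m : ℤ × ℤ) : V ⊗[F] V →ₗ[F] V ⊗[F] V :=
  bVV.constr F fun p =>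
    !![ ((-1 : F) ^ (l.2 * m.2) * q ^ (-(pr m l))) • (v0 ⊗ₜ[F] v0),
        ((-1 : F) ^ (l.2 * (m.2 + 1)) * q ^ (-(pr (am m) l))) • (v1 ⊗ₜ[F] v0) ;
        ((-1 : F) ^ ((l.2 + 1) * m.2)) •
          ( (q ^ (-(pr m (am l)))) • (v0 ⊗ₜ[F] v1)
            + ((-1 : F) ^ m.2 * q ^ (-(pr (am m) l)) * (q⁻¹ - q) * qn (m.1 + m.2))
              • (v1 ⊗ₜ[F] v0) ),
        ((-1 : F) ^ ((l.2 + 1) * (m.2 + 1)) * q ^ (-(pr (am m) (am l)))) • (v1 ⊗ₜ[F] v1) ]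
      p.1 p.2

/-! Everything is a finite computation in the basis `vᵢ ⊗ vⱼ`. In matrix form each coproduct is
a sum of Kronecker products of `2 × 2` matrices, so each equivariance identity is an identity of
`4 × 4` matrices. Once the signs `(-1)^|λ|`, `(-1)^|μ|` are fixed to `±1` and the denominator
`q - q⁻¹` of the quantum integers is cleared, its entries are polynomial identities in `q` and the
powers `q^λᵢ`, `q^μᵢ`, `q^(λᵢμᵢ)`.
For bijectivity: `T` sends `v₀⊗v₀`, `v₀⊗v₁`, `v₁⊗v₁` to nonzero multiples of basis vectors, and
`v₁⊗v₀` to a nonzero multiple of `v₀⊗v₁` plus a multiple of `v₁⊗v₀`, so its range contains the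
basis. -/

open LinearMap (toMatrix)
open scoped Kronecker

lemma neg_one_zpow_eq_or {α : Type*} [DivisionMonoid α] [HasDistribNeg α] (n : ℤ) :
    (-1 : α) ^ n = 1 ∨ (-1 : α) ^ n = -1 :=
  (Int.even_or_odd n).imp Even.neg_one_zpow Odd.neg_one_zpow

lemma comp_eq_comp_iff_toMatrix {R M ι : Type*} [CommRing R] [AddCommGroup M] [Module R M]
    [Fintype ι] [DecidableEq ι] (b : Module.Basis ι R M) (T A B : M →ₗ[R] M) :
    T ∘ₗ A = B ∘ₗ T ↔ toMatrix b b T * toMatrix b b A = toMatrix b b B * toMatrix b b T := by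
  simp only [← LinearMap.toMatrix_comp, (toMatrix b b).injective.eq_iff]

lemma q_ne_zero : q ≠ 0 := RatFunc.X_ne_zero

lemma q_sq_sub_one_ne_zero : q ^ 2 - 1 ≠ 0 := by
  intro h
  have := congrArg RatFunc.intDegree (sub_eq_zero.1 h)
  rw [sq, RatFunc.intDegree_mul q_ne_zero q_ne_zero, RatFunc.intDegree_one, q,
    RatFunc.intDegree_X] at this
  omega

lemma neg_one_zpow_mul_q_zpow_ne_zero (a e : ℤ) : (-1 : F) ^ a * q ^ e ≠ 0 :=
  mul_ne_zero (zpow_ne_zero _ (by norm_num)) (zpow_ne_zero _ q_ne_zero)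

lemma toMatrix_bV_toLin' (M : Matrix (Fin 2) (Fin 2) F) : toMatrix bV bV (Matrix.toLin' M) = M := by
  rw [bV, LinearMap.toMatrix_eq_toMatrix', LinearMap.toMatrix'_toLin']

lemma toMatrix_bVV_map (f g : V →ₗ[F] V) :
    toMatrix bVV bVV (TensorProduct.map f g) = toMatrix bV bV f ⊗ₖ toMatrix bV bV g :=
  TensorProduct.toMatrix_map bV bV bV bV f g

lemma bVV_apply (i j : Fin 2) : bVV (i, j) = Pi.single i 1 ⊗ₜ Pi.single j 1 := by
  simp [bVV, bV]

lemma bVV_repr_tmul (x y : V) (i j : Fin 2) : bVV.repr (x ⊗ₜ y) (i, j) = x i * y j := by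
  simp [bVV, bV, mul_comm]

lemma Tmap_surjective (l m : ℤ × ℤ) : Function.Surjective (Tmap l m) := by
  set R := LinearMap.range (Tmap l m)
  have image (k n : Fin 2) : Tmap l m (bVV (k, n)) ∈ R := LinearMap.mem_range_self _ _
  have i00 := image 0 0
  have i01 := image 0 1
  have i10 := image 1 0
  have i11 := image 1 1
  simp only [Tmap, Module.Basis.constr_basis, Matrix.of_apply, Matrix.cons_val',
    Matrix.cons_val_zero, Matrix.cons_val_one, Matrix.cons_val_fin_one, smul_add,
    smul_smul] at i00 i01 i10 i11
  have h00 : v0 ⊗ₜ v0 ∈ R := (R.smul_mem_iff (neg_one_zpow_mul_q_zpow_ne_zero _ _)).1 i00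
  have h10 : v1 ⊗ₜ v0 ∈ R := (R.smul_mem_iff (neg_one_zpow_mul_q_zpow_ne_zero _ _)).1 i01
  have h11 : v1 ⊗ₜ v1 ∈ R := (R.smul_mem_iff (neg_one_zpow_mul_q_zpow_ne_zero _ _)).1 i11
  have h01 : v0 ⊗ₜ v1 ∈ R := (R.smul_mem_iff (neg_one_zpow_mul_q_zpow_ne_zero _ _)).1
    ((R.add_mem_iff_left (R.smul_mem _ h10)).1 i10)
  rw [← LinearMap.range_eq_top, eq_top_iff, ← bVV.span_eq, Submodule.span_le]
  rintro _ ⟨⟨k, n⟩, rfl⟩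
  rw [bVV_apply]
  fin_cases k <;> fin_cases n <;> assumption

lemma Tmap_bijective (l m : ℤ × ℤ) : Function.Bijective (Tmap l m) :=
  ⟨LinearMap.injective_iff_surjective.2 (Tmap_surjective l m), Tmap_surjective l m⟩

lemma Tmap_intertwines (l m : ℤ × ℤ) :
    Tmap l m ∘ₗ ΔE l m = ΔE m l ∘ₗ Tmap l m ∧
    Tmap l m ∘ₗ ΔF l m = ΔF m l ∘ₗ Tmap l m ∧
    ∀ h : ℤ × ℤ, Tmap l m ∘ₗ ΔQ l m h = ΔQ m l h ∘ₗ Tmap l m := by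
  refine ⟨?_, ?_, fun h => ?_⟩ <;>
    simp only [comp_eq_comp_iff_toMatrix bVV, ΔE, ΔF, ΔQ, Kinv, Kop, Pop, Eop, Fop, Qop, map_add,
      toMatrix_bVV_map, LinearMap.toMatrix_comp bV bV bV, LinearMap.toMatrix_id,
      toMatrix_bV_toLin'] <;>
    ext ⟨i, j⟩ ⟨k, n⟩ <;>
    fin_cases i <;> fin_cases j <;> fin_cases k <;> fin_cases n <;>
    simp only [Matrix.mul_apply, Fintype.sum_prod_type, Fin.sum_univ_two, Matrix.add_apply,
      Matrix.one_apply_eq, Matrix.one_apply_ne, Matrix.kroneckerMap_apply, Matrix.of_apply,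
      Matrix.cons_val', Matrix.cons_val_zero, Matrix.cons_val_one, Matrix.cons_val_fin_one,
      LinearMap.toMatrix_apply, Tmap, Module.Basis.constr_basis, map_add, map_smul,
      Finsupp.coe_add, Finsupp.coe_smul, Pi.add_apply, Pi.smul_apply, smul_eq_mul, bVV_repr_tmul,
      v0, v1, Pi.single_eq_same, Pi.single_eq_of_ne, ne_eq, zero_ne_one, one_ne_zero,
      not_false_eq_true, Fin.isValue, Fin.zero_eta, Fin.mk_one, mul_one, mul_zero, one_mul,
      zero_mul, add_zero, zero_add]
  all_goals
    rcases neg_one_zpow_eq_or (α := F) l.2 with hl | hl <;>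
      rcases neg_one_zpow_eq_or (α := F) m.2 with hm | hm <;>
      simp only [pr, am, qn, hl, hm, mul_sub, sub_mul, add_mul, mul_add, neg_mul, mul_one, one_mul,
        zpow_one, zpow_neg, zpow_add₀ q_ne_zero, zpow_sub₀ q_ne_zero,
        zpow_add₀ (neg_ne_zero.2 one_ne_zero : (-1 : F) ≠ 0)] <;>
      field_simp [q_ne_zero, q_sq_sub_one_ne_zero] <;> ring

theorem Tmap_equivariant_iso_general (l m : ℤ × ℤ) :
    Function.Bijective (Tmap l m) ∧
    Tmap l m ∘ₗ ΔE l m = ΔE m l ∘ₗ Tmap l m ∧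
    Tmap l m ∘ₗ ΔF l m = ΔF m l ∘ₗ Tmap l m ∧
    ∀ h : ℤ × ℤ, Tmap l m ∘ₗ ΔQ l m h = ΔQ m l h ∘ₗ Tmap l m :=
  ⟨Tmap_bijective l m, Tmap_intertwines l m⟩

/-- `T_{λ,μ}` is an equivariant isomorphism `L(λ)⊗L(μ) → L(μ)⊗L(λ)`. -/
theorem Tmap_equivariant_iso (l m : ℤ × ℤ) (hl : l.1 + l.2 ≠ 0) (hm : m.1 + m.2 ≠ 0) :
    Function.Bijective (Tmap l m) ∧
    Tmap l m ∘ₗ ΔE l m = ΔE m l ∘ₗ Tmap l m ∧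
    Tmap l m ∘ₗ ΔF l m = ΔF m l ∘ₗ Tmap l m ∧
    ∀ h : ℤ × ℤ, Tmap l m ∘ₗ ΔQ l m h = ΔQ m l h ∘ₗ Tmap l m :=
  Tmap_equivariant_iso_general l m
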